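/- Let G be a finite group, I a finite set, σ ∈ Σ_I. Two elements gσ and g'σ of G^I ⋊ Σ_I are conjugate by an element of G^I (embedded as G^I ⋊ 1) if and only if for every σ-orbit a, the cycle products ψ^σ(g)_a and ψ^σ(g')_a are conjugate in G. -/

import Mathlib

/-- The action of `Σ_I` on `G^I` used to form the wreath product `G^I ⋊ Σ_I`:
`(h^σ)_i = h_{σ i}`, and the semidirect-product convention of Mathlib
`(g, σ) * (h, τ) = (g * φ σ h, σ τ)` realizes `gσ · hτ = g h^{σ⁻¹} στ`. -/
def wrAct (G I : Type*) [Group G] : Equiv.Perm I →* MulAut (I → G) where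
  toFun σ :=
    { toFun := fun g i => g (σ⁻¹ i)
      invFun := fun g i => g (σ i)
      left_inv := fun g => funext fun i => by simp
      right_inv := fun g => funext fun i => by simp
      map_mul' := fun g h => rfl }
  map_one' := by
    ext g i
    simp
  map_mul' := fun σ τ => by
    ext g i
    simp [Equiv.Perm.mul_apply]

/-- The wreath product `G^I ⋊ Σ_I`. -/
abbrev WreathProduct (G I : Type*) [Group G] : Type _ :=
  (I → G) ⋊[wrAct G I] Equiv.Perm I

/-- The (ordered) partial cycle product
`g_{σ^{n-1}(i)} · g_{σ^{n-2}(i)} ⋯ g_{σ(i)} · g_i` of `g : I → G` along the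
`σ`-trajectory of `i`; for `n` the size of the `σ`-orbit of `i` this is the
cycle product `ψ^σ(g)_a` of the orbit `a` of `i` with representative `i`. -/
def cycProd {G I : Type*} [Group G] (σ : Equiv.Perm I) (g : I → G) (i : I) (n : ℕ) : G :=
  ((List.range n).map fun k => g ((σ ^ (n - 1 - k)) i)).prod

/-- The element `ν^σ(g) ∈ G^I`, relative to a choice `rep` of orbit
representatives and the "position" function `m` (so `i = σ^(m i) (rep i)`):
`ν^σ(g)_{σ^m(i_a)} = g_{σ^m(i_a)} ⋯ g_{σ(i_a)} g_{i_a}`. -/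
def nuFun {G I : Type*} [Group G] (σ : Equiv.Perm I) (g : I → G)
    (rep : I → I) (m : I → ℕ) : I → G :=
  fun i => cycProd σ g (rep i) (m i + 1)

/-- The element `ε_𝔤 ∈ G^I` whose component at each orbit representative is the
cycle product of that orbit and is `1` elsewhere. -/
noncomputable def epsFun {G I : Type*} [Group G] [DecidableEq I] (σ : Equiv.Perm I) (g : I → G)
    (rep : I → I) : I → G :=
  fun i => if rep i = i then cycProd σ g i (Function.minimalPeriod (⇑σ) i) else 1

open SemidirectProduct

/-!
STATEMENT 3: Two elements `gσ` and `g'σ` of `G^I ⋊ Σ_I` are conjugate by an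
element of `G^I` (embedded as `G^I ⋊ 1`) if and only if for every `σ`-orbit
(here given by a choice `rep` of orbit representatives), the cycle products
`ψ^σ(g)_a` and `ψ^σ(g')_a` are conjugate in `G`.
-/
section aux
variable {G I : Type*} [Group G]

lemma cycProd_zero (σ : Equiv.Perm I) (g : I → G) (i : I) : cycProd σ g i 0 = 1 := rfl

lemma cycProd_succ (σ : Equiv.Perm I) (g : I → G) (i : I) (n : ℕ) :
    cycProd σ g i (n + 1) = g ((σ ^ n) i) * cycProd σ g i n := by
  unfold cycProd
  rw [List.range_succ_eq_map, List.map_cons, List.prod_cons, List.map_map]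
  congr 2
  · congr 1
    funext k
    simp only [Function.comp_apply]
    congr 3
    omega

lemma cycProd_add (σ : Equiv.Perm I) (g : I → G) (x : I) (a b : ℕ) :
    cycProd σ g x (a + b) = cycProd σ g ((σ ^ b) x) a * cycProd σ g x b := by
  induction a with
  | zero => simp [cycProd_zero]
  | succ a ih =>
    have h : a + 1 + b = (a + b) + 1 := by omega
    rw [h, cycProd_succ, ih, cycProd_succ, ← mul_assoc]
    congr 2
    rw [← Equiv.Perm.mul_apply, ← pow_add]

lemma cycProd_mod (σ : Equiv.Perm I) (g : I → G) (x : I) {n : ℕ} (hx : (σ ^ n) x = x) (k : ℕ) :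
    cycProd σ g x k = cycProd σ g x (k % n) * (cycProd σ g x n) ^ (k / n) := by
  have key : ∀ q r, cycProd σ g x (r + q * n) = cycProd σ g x r * (cycProd σ g x n) ^ q := by
    intro q
    induction q with
    | zero => simp
    | succ q ih =>
      intro r
      have h : r + (q + 1) * n = (r + q * n) + n := by ring
      rw [h, cycProd_add, hx, ih, mul_assoc, ← pow_succ]
  conv_lhs => rw [← Nat.mod_add_div' k n]
  exact key _ _

lemma pow_apply_modEq (σ : Equiv.Perm I) {x : I} {a b : ℕ} (h : (σ ^ a) x = (σ ^ b) x) :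
    a ≡ b [MOD Function.minimalPeriod (⇑σ) x] := by
  wlog hab : a ≤ b generalizing a b
  · exact (this h.symm (le_of_not_ge hab)).symm
  have h1 : (σ ^ (b - a)) x = x := by
    have h2 : (σ ^ a) ((σ ^ (b - a)) x) = (σ ^ a) x := by
      rw [← Equiv.Perm.mul_apply, ← pow_add]
      rw [show a + (b - a) = b from by omega]
      exact h.symm
    exact (σ ^ a).injective h2
  have hper : Function.IsPeriodicPt (⇑σ) (b - a) x := by
    show (⇑σ)^[b - a] x = x
    rwa [← Equiv.Perm.coe_pow]
  exact (Nat.modEq_iff_dvd' hab).mpr hper.minimalPeriod_dvd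

lemma perm_pow_minimalPeriod (σ : Equiv.Perm I) (x : I) :
    (σ ^ Function.minimalPeriod (⇑σ) x) x = x := by
  show ⇑(σ ^ _) x = x
  rw [Equiv.Perm.coe_pow]
  exact Function.iterate_minimalPeriod

end aux

theorem stmt3 {G I : Type*} [Group G] [Fintype I] [DecidableEq I]
    (σ : Equiv.Perm I) (g g' : I → G) (rep : I → I)
    (hrep : ∀ i, rep (σ i) = rep i)
    (hreporb : ∀ i, σ.SameCycle (rep i) i) :
    (∃ f : I → G,
        (inl (φ := wrAct G I) f)⁻¹
            * (inl (φ := wrAct G I) g * inr (φ := wrAct G I) σ)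
            * inl (φ := wrAct G I) f
          = inl (φ := wrAct G I) g' * inr (φ := wrAct G I) σ)
      ↔ ∀ i : I,
          IsConj (cycProd σ g (rep i) (Function.minimalPeriod (⇑σ) (rep i)))
            (cycProd σ g' (rep i) (Function.minimalPeriod (⇑σ) (rep i))) := by
  have hred : ∀ f : I → G,
      ((inl (φ := wrAct G I) f)⁻¹
          * (inl (φ := wrAct G I) g * inr (φ := wrAct G I) σ)
          * inl (φ := wrAct G I) f
        = inl (φ := wrAct G I) g' * inr (φ := wrAct G I) σ)
      ↔ ∀ i, g' i = (f i)⁻¹ * g i * f (σ⁻¹ i) := by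
    intro f
    have hcalc : (inl (φ := wrAct G I) f)⁻¹
        * (inl (φ := wrAct G I) g * inr (φ := wrAct G I) σ)
        * inl (φ := wrAct G I) f
        = inl (φ := wrAct G I) (f⁻¹ * g * wrAct G I σ f) * inr (φ := wrAct G I) σ := by
      ext <;>
        simp [SemidirectProduct.mul_left, SemidirectProduct.mul_right,
          SemidirectProduct.inv_left, SemidirectProduct.inv_right, mul_assoc]
    rw [hcalc]
    constructor
    · intro hE
      have h3 := inl_injective (mul_right_cancel hE)
      intro i
      rw [← h3]
      rfl
    · intro hp
      have h4 : f⁻¹ * g * wrAct G I σ f = g' := funext fun i => (hp i).symm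
      rw [h4]
  constructor
  · rintro ⟨f, hf⟩ i
    have hptw : ∀ j, g' j = (f j)⁻¹ * g j * f (σ⁻¹ j) := (hred f).mp hf
    set x := rep i with hxdef
    set n := Function.minimalPeriod (⇑σ) x with hndef
    have key : ∀ N, cycProd σ g' x N
        = (f (σ⁻¹ ((σ ^ N) x)))⁻¹ * cycProd σ g x N * f (σ⁻¹ x) := by
      intro N
      induction N with
      | zero => simp [cycProd_zero]
      | succ N ih =>
        rw [cycProd_succ, cycProd_succ, ih, hptw ((σ ^ N) x)]
        have h1 : σ⁻¹ ((σ ^ (N + 1)) x) = (σ ^ N) x := by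
          rw [pow_succ', Equiv.Perm.mul_apply, Equiv.Perm.inv_eq_iff_eq]
        rw [h1]
        group
    have hx : (σ ^ n) x = x := perm_pow_minimalPeriod σ x
    have hkn := key n
    rw [hx] at hkn
    rw [isConj_iff]
    exact ⟨(f (σ⁻¹ x))⁻¹, by rw [hkn]; group⟩
  · intro h
    choose m hmlt hm using fun i => (hreporb i).exists_pow_eq'
    have hrep' : ∀ i, rep (σ⁻¹ i) = rep i := fun i => by
      have h6 := hrep (σ⁻¹ i)
      rw [Equiv.Perm.coe_inv, Equiv.apply_symm_apply] at h6
      exact h6.symm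
    choose c hc using fun i => isConj_iff.mp (h i)
    refine ⟨fun j => cycProd σ g (rep j) (m j + 1) * (c (rep j))⁻¹
        * (cycProd σ g' (rep j) (m j + 1))⁻¹, (hred _).mpr fun i => ?_⟩
    have hrep_pow : ∀ (k : ℕ) (j : I), rep ((σ ^ k) j) = rep j := by
      intro k
      induction k with
      | zero => simp
      | succ k ih =>
        intro j
        rw [pow_succ', Equiv.Perm.mul_apply, hrep, ih]
    have hrepidem : rep (rep i) = rep i := by
      have h5 := hrep_pow (m i) (rep i)
      rw [hm i] at h5
      exact h5.symm
    simp only [hrep' i, hrepidem]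
    set x := rep i with hxdef
    set n := Function.minimalPeriod (⇑σ) x with hndef
    have hx : (σ ^ n) x = x := perm_pow_minimalPeriod σ x
    set a := m i + 1 with hadef
    set b1 := m (σ⁻¹ i) + 1 with hb1def
    have hmx : (σ ^ m (σ⁻¹ i)) x = σ⁻¹ i := by
      have h6 := hm (σ⁻¹ i)
      rwa [hrep' i] at h6
    have hb1 : (σ ^ b1) x = i := by
      rw [hb1def, pow_succ', Equiv.Perm.mul_apply, hmx, Equiv.Perm.coe_inv, Equiv.apply_symm_apply]
    have hσa : (σ ^ a) x = σ i := by
      rw [hadef, pow_succ', Equiv.Perm.mul_apply, hm i]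
    have hσb : (σ ^ (b1 + 1)) x = σ i := by
      rw [pow_succ', Equiv.Perm.mul_apply, hb1]
    have hab : a % n = (b1 + 1) % n := pow_apply_modEq σ (hσa.trans hσb.symm)
    -- cycle product at x, with conjugator C := c x
    set C := c x with hCdef
    have hcx : C * cycProd σ g x n * C⁻¹ = cycProd σ g' x n := by
      have h7 := hc (rep i)
      rwa [hrepidem, ← hxdef, ← hndef] at h7
    have hconj : ∀ k : ℕ, C * (cycProd σ g x n) ^ k * C⁻¹ = (cycProd σ g' x n) ^ k := by
      intro k
      rw [← conj_pow, hcx]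
    have hPa := cycProd_mod σ g x hx a
    have hPb := cycProd_mod σ g x hx (b1 + 1)
    have hQa := cycProd_mod σ g' x hx a
    have hQb := cycProd_mod σ g' x hx (b1 + 1)
    rw [← hab] at hPb hQb
    have hgi : cycProd σ g x (b1 + 1) = g i * cycProd σ g x b1 := by
      rw [cycProd_succ, hb1]
    have hg'i : cycProd σ g' x (b1 + 1) = g' i * cycProd σ g' x b1 := by
      rw [cycProd_succ, hb1]
    have e1 : (cycProd σ g x a)⁻¹ * (g i * cycProd σ g x b1)
        = ((cycProd σ g x n) ^ (a / n))⁻¹ * (cycProd σ g x n) ^ ((b1 + 1) / n) := by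
      rw [← hgi, hPa, hPb]
      group
    have e2 : C * (((cycProd σ g x n) ^ (a / n))⁻¹ * (cycProd σ g x n) ^ ((b1 + 1) / n)) * C⁻¹
        = ((cycProd σ g' x n) ^ (a / n))⁻¹ * (cycProd σ g' x n) ^ ((b1 + 1) / n) := by
      rw [← hconj (a / n), ← hconj ((b1 + 1) / n)]
      group
    have e3 : cycProd σ g' x a * (((cycProd σ g' x n) ^ (a / n))⁻¹
          * (cycProd σ g' x n) ^ ((b1 + 1) / n)) * (cycProd σ g' x b1)⁻¹
        = g' i := by
      have hQb1 : cycProd σ g' x b1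
          = (g' i)⁻¹ * (cycProd σ g' x (a % n) * (cycProd σ g' x n) ^ ((b1 + 1) / n)) := by
        rw [← hQb, hg'i]
        group
      rw [hQa, hQb1]
      group
    calc g' i
        = cycProd σ g' x a * (C * ((cycProd σ g x a)⁻¹ * (g i * cycProd σ g x b1)) * C⁻¹)
            * (cycProd σ g' x b1)⁻¹ := by rw [e1, e2, e3]
      _ = (cycProd σ g x a * C⁻¹ * (cycProd σ g' x a)⁻¹)⁻¹ * g i
            * (cycProd σ g x b1 * C⁻¹ * (cycProd σ g' x b1)⁻¹) := by group
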